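/- Let ν > 0 and k ∈ ℝ. Let f : [0,∞) × [−1,1] → ℂ be continuous, with continuous derivatives ∂_t f, ∂_y f, ∂²_y f, satisfying f(t,−1) = f(t,1) = 0 for all t ≥ 0 and ∂_t f(t,y) = ν(∂²_y f(t,y) − k² f(t,y)) − i k y f(t,y) + g(t,y) on [0,∞) × (−1,1), where g : [0,∞) × [−1,1] → ℂ is continuous. Suppose that for each t, φ(t,·) : [−1,1] → ℂ is twice continuously differentiable with φ(t,±1) = 0 and ∂²_y φ(t,y) − k² φ(t,y) = g(t,y) on (−1,1), with φ and ∂_y φ jointly continuous. Then for every t ≥ 0: ‖f(t,·)‖²_{L²(−1,1)} + ν ∫_{0}^{t} ( ‖∂_y f(s,·)‖²_{L²} + k² ‖f(s,·)‖²_{L²} ) ds ≤ ‖f(0,·)‖²_{L²(−1,1)} + ν^{−1} ∫_{0}^{t} ( ‖∂_y φ(s,·)‖²_{L²} + k² ‖φ(s,·)‖²_{L²} ) ds. -/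

import Mathlib

/-!
Let `E(t) = ‖f(t)‖²`, so `E' = 2 ∫ ⟪f, ∂ₜf⟫`. The drift `-iky f` is pointwise orthogonal to `f`, and
with `g = (∂²_y - k²) φ` the remaining part of `∂ₜf` is `∂_y (ν ∂_y f + ∂_y φ) - k² (ν f + φ)`.
Integrating by parts against `f`, which vanishes at `y = ±1`, gives
`E' = -2 ∫ (⟪∂_y f, ν ∂_y f + ∂_y φ⟫ + k² ⟪f, ν f + φ⟫)`, and Young's inequality
`⟪x, ν x + y⟫ ≥ ν/2 ‖x‖² - ‖y‖²/(2ν)` turns this into `E' ≤ -ν ‖∇f‖² + ν⁻¹ ‖∇φ‖²`, which is then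
integrated over `[0, t]`.
-/

open Set

/-- The squared `L²` norm of a function on the interval `(-1, 1)`. -/
noncomputable def L2sq (h : ℝ → ℂ) : ℝ :=
  ∫ y in (-1 : ℝ)..1, ‖h y‖ ^ 2

open MeasureTheory Function Metric
open scoped InnerProductSpace

section ParametricIntegral

variable {E : Type*} [NormedAddCommGroup E] [NormedSpace ℝ E]

theorem continuousOn_intervalIntegral_of_continuousOn_prod {F : ℝ → ℝ → E} {a b c d : ℝ}
    (hcd : c ≤ d) (hab : a ≤ b) (hF : ContinuousOn (uncurry F) (Icc c d ×ˢ Icc a b)) :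
    ContinuousOn (fun t => ∫ y in a..b, F t y) (Icc c d) := by
  set G : ℝ → ℝ → E := fun t y => F (projIcc c d hcd t) (projIcc a b hab y)
  have hG : Continuous (uncurry G) :=
    hF.comp_continuous (f := fun p : ℝ × ℝ => ((projIcc c d hcd p.1 : ℝ), (projIcc a b hab p.2 : ℝ)))
      (by fun_prop) fun p => ⟨Subtype.prop _, Subtype.prop _⟩
  refine (intervalIntegral.continuous_parametric_intervalIntegral_of_continuous' hG a b
    |>.continuousOn).congr fun t ht => intervalIntegral.integral_congr fun y hy => ?_
  rw [uIcc_of_le hab] at hy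
  simp [G, projIcc_of_mem hcd ht, projIcc_of_mem hab hy]

theorem hasDerivAt_intervalIntegral_of_continuousOn {F F' : ℝ → ℝ → E} {a b t₀ δ : ℝ}
    (hδ : 0 < δ) (hF : ContinuousOn (uncurry F) (closedBall t₀ δ ×ˢ uIcc a b))
    (hF' : ContinuousOn (uncurry F') (closedBall t₀ δ ×ˢ uIcc a b))
    (hderiv : ∀ t ∈ ball t₀ δ, ∀ y ∈ uIcc a b, HasDerivAt (F · y) (F' t y) t) :
    HasDerivAt (fun t => ∫ y in a..b, F t y) (∫ y in a..b, F' t₀ y) t₀ := by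
  have slice : ∀ {H : ℝ → ℝ → E}, ContinuousOn (uncurry H) (closedBall t₀ δ ×ˢ uIcc a b) →
      ∀ t ∈ closedBall t₀ δ, ContinuousOn (H t) (uIcc a b) := fun hH t ht =>
    hH.comp (f := fun y => (t, y)) (Continuous.continuousOn (by fun_prop)) fun y hy => ⟨ht, hy⟩
  obtain ⟨M, hM⟩ := (isCompact_closedBall t₀ δ).prod isCompact_uIcc
    |>.exists_bound_of_continuousOn hF'
  refine (intervalIntegral.hasDerivAt_integral_of_dominated_loc_of_deriv_le (bound := fun _ => M)
    (ball_mem_nhds t₀ hδ) ?_ (slice hF t₀ (mem_closedBall_self hδ.le)).intervalIntegrable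
    ((slice hF' t₀ (mem_closedBall_self hδ.le)).mono uIoc_subset_uIcc
      |>.aestronglyMeasurable measurableSet_uIoc) ?_ intervalIntegrable_const ?_).2
  · filter_upwards [ball_mem_nhds t₀ hδ] with t ht
    exact ((slice hF t (ball_subset_closedBall ht)).mono uIoc_subset_uIcc).aestronglyMeasurable
      measurableSet_uIoc
  · exact ae_of_all _ fun y hy t ht => hM (t, y) ⟨ball_subset_closedBall ht, uIoc_subset_uIcc hy⟩
  · exact ae_of_all _ fun y hy t ht => hderiv t ht y (uIoc_subset_uIcc hy)

end ParametricIntegral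

section InnerProduct

variable {E : Type*} [NormedAddCommGroup E] [InnerProductSpace ℝ E]

theorem integral_inner_deriv_eq_neg_integral_deriv_inner {u u' v v' : ℝ → E} {a b : ℝ}
    (hu : ∀ x ∈ uIcc a b, HasDerivAt u (u' x) x) (hv : ∀ x ∈ uIcc a b, HasDerivAt v (v' x) x)
    (huv' : IntervalIntegrable (fun x => ⟪u x, v' x⟫_ℝ) volume a b)
    (hu'v : IntervalIntegrable (fun x => ⟪u' x, v x⟫_ℝ) volume a b)
    (ha : u a = 0) (hb : u b = 0) :
    ∫ x in a..b, ⟪u x, v' x⟫_ℝ = -∫ x in a..b, ⟪u' x, v x⟫_ℝ := by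
  have := intervalIntegral.integral_eq_sub_of_hasDerivAt (fun x hx => (hu x hx).inner ℝ (hv x hx))
    (huv'.add hu'v)
  rw [intervalIntegral.integral_add huv' hu'v, ha, hb] at this
  simp only [inner_zero_left, sub_self] at this
  linarith

theorem real_inner_smul_add_eq {ν : ℝ} (hν : ν ≠ 0) (x y : E) :
    ⟪x, ν • x + y⟫_ℝ = ν / 2 * ‖x‖ ^ 2 - ν⁻¹ / 2 * ‖y‖ ^ 2 + ν⁻¹ / 2 * ‖ν • x + y‖ ^ 2 := by
  rw [norm_add_sq_real, norm_smul, real_inner_smul_left, inner_add_right, real_inner_smul_right,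
    real_inner_self_eq_norm_sq, mul_pow, Real.norm_eq_abs, sq_abs]
  field_simp
  ring

theorem half_mul_sq_sub_le_real_inner_smul_add {ν : ℝ} (hν : 0 < ν) (x y : E) :
    ν / 2 * ‖x‖ ^ 2 - ν⁻¹ / 2 * ‖y‖ ^ 2 ≤ ⟪x, ν • x + y⟫_ℝ := by
  rw [real_inner_smul_add_eq hν.ne']
  have : 0 ≤ ν⁻¹ / 2 * ‖ν • x + y‖ ^ 2 := by positivity
  linarith

end InnerProduct

theorem Complex.real_inner_I_mul_self (c : ℝ) (z : ℂ) : ⟪z, I * c * z⟫_ℝ = 0 := by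
  simp only [Complex.inner, Complex.mul_re, Complex.mul_im, Complex.I_re, Complex.I_im,
    Complex.ofReal_re, Complex.ofReal_im, Complex.conj_re, Complex.conj_im]
  ring

theorem half_mul_L2sq_sub_le_integral_inner {ν : ℝ} (hν : 0 < ν) {u v : ℝ → ℂ}
    (hu : ContinuousOn u (Icc (-1) 1)) (hv : ContinuousOn v (Icc (-1) 1)) :
    ν / 2 * L2sq u - ν⁻¹ / 2 * L2sq v ≤ ∫ y in (-1 : ℝ)..1, ⟪u y, ν • u y + v y⟫_ℝ := by
  have hI : ∀ {h : ℝ → ℝ}, ContinuousOn h (Icc (-1) 1) → IntervalIntegrable h volume (-1) 1 :=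
    fun hc => hc.intervalIntegrable_of_Icc (by norm_num)
  have hu2 : IntervalIntegrable (fun y => ‖u y‖ ^ 2) volume (-1) 1 := hI (hu.norm.pow 2)
  have hv2 : IntervalIntegrable (fun y => ‖v y‖ ^ 2) volume (-1) 1 := hI (hv.norm.pow 2)
  have huv : ContinuousOn (fun y => ⟪u y, ν • u y + v y⟫_ℝ) (Icc (-1) 1) := by fun_prop
  rw [L2sq, L2sq, ← intervalIntegral.integral_const_mul, ← intervalIntegral.integral_const_mul,
    ← intervalIntegral.integral_sub (hu2.const_mul _) (hv2.const_mul _)]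
  exact intervalIntegral.integral_mono_on (by norm_num) ((hu2.const_mul _).sub (hv2.const_mul _))
    (hI huv) fun y _ => half_mul_sq_sub_le_real_inner_smul_add hν (u y) (v y)

/-- `‖∇(e^{ikx} h(y))‖²` on the channel, with `hy` standing for `∂_y h`. -/
noncomputable def gradL2sq (k : ℝ) (h hy : ℝ → ℂ) : ℝ :=
  L2sq hy + k ^ 2 * L2sq h

theorem continuousOn_L2sq {h : ℝ → ℝ → ℂ} {c d : ℝ} (hcd : c ≤ d)
    (hh : ContinuousOn (uncurry h) (Icc c d ×ˢ Icc (-1) 1)) :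
    ContinuousOn (fun t => L2sq (h t)) (Icc c d) :=
  continuousOn_intervalIntegral_of_continuousOn_prod hcd (by norm_num) (hh.norm.pow 2)

theorem continuousOn_gradL2sq (k : ℝ) {h hy : ℝ → ℝ → ℂ} {c d : ℝ} (hcd : c ≤ d)
    (hh : ContinuousOn (uncurry h) (Icc c d ×ˢ Icc (-1) 1))
    (hhy : ContinuousOn (uncurry hy) (Icc c d ×ˢ Icc (-1) 1)) :
    ContinuousOn (fun t => gradL2sq k (h t) (hy t)) (Icc c d) :=
  (continuousOn_L2sq hcd hhy).add (continuousOn_const.mul (continuousOn_L2sq hcd hh))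

theorem hasDerivAt_L2sq {h h' : ℝ → ℝ → ℂ} {t₀ δ : ℝ} (hδ : 0 < δ)
    (hh : ContinuousOn (uncurry h) (closedBall t₀ δ ×ˢ Icc (-1) 1))
    (hh' : ContinuousOn (uncurry h') (closedBall t₀ δ ×ˢ Icc (-1) 1))
    (hderiv : ∀ t ∈ ball t₀ δ, ∀ y ∈ Icc (-1 : ℝ) 1, HasDerivAt (h · y) (h' t y) t) :
    HasDerivAt (fun t => L2sq (h t)) (2 * ∫ y in (-1 : ℝ)..1, ⟪h t₀ y, h' t₀ y⟫_ℝ) t₀ := by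
  have hIcc : uIcc (-1 : ℝ) 1 = Icc (-1) 1 := uIcc_of_le (by norm_num)
  rw [← intervalIntegral.integral_const_mul]
  exact hasDerivAt_intervalIntegral_of_continuousOn hδ (hIcc ▸ hh.norm.pow 2)
    (hIcc ▸ continuousOn_const.mul (hh.inner hh'))
    fun t ht y hy => (hderiv t ht y (hIcc ▸ hy)).norm_sq

open Complex in
theorem real_inner_flux_deriv_eq_of_mode_eq {ν k y : ℝ} {F Ft Fyy G Φ Φyy : ℂ}
    (hFt : Ft = ν * (Fyy - k ^ 2 * F) - I * k * y * F + G) (hΦ : Φyy - k ^ 2 * Φ = G) :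
    ⟪F, ν • Fyy + Φyy⟫_ℝ = ⟪F, Ft⟫_ℝ + k ^ 2 * ⟪F, ν • F + Φ⟫_ℝ := by
  have hFt' : Ft = (ν • Fyy + Φyy) - (k ^ 2 : ℝ) • (ν • F + Φ) - I * (k * y : ℝ) * F := by
    rw [hFt, ← hΦ]
    simp only [Complex.real_smul]
    push_cast
    ring
  rw [hFt', inner_sub_right, inner_sub_right, real_inner_smul_right, real_inner_I_mul_self]
  ring

open Complex in
theorem two_mul_integral_inner_le_gradL2sq {ν k : ℝ} (hν : 0 < ν)
    {F Ft Fy Fyy G Φ Φy Φyy : ℝ → ℂ}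
    (hF : ∀ y ∈ Icc (-1 : ℝ) 1, HasDerivAt F (Fy y) y)
    (hFy : ∀ y ∈ Icc (-1 : ℝ) 1, HasDerivAt Fy (Fyy y) y)
    (hΦ : ∀ y ∈ Icc (-1 : ℝ) 1, HasDerivAt Φ (Φy y) y)
    (hΦy : ∀ y ∈ Icc (-1 : ℝ) 1, HasDerivAt Φy (Φyy y) y)
    (hFt : ContinuousOn Ft (Icc (-1) 1)) (hFb : F (-1) = 0 ∧ F 1 = 0)
    (hFeq : ∀ y ∈ Ioo (-1 : ℝ) 1,
      Ft y = ν * (Fyy y - k ^ 2 * F y) - I * k * y * F y + G y)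
    (hΦeq : ∀ y ∈ Ioo (-1 : ℝ) 1, Φyy y - k ^ 2 * Φ y = G y) :
    2 * ∫ y in (-1 : ℝ)..1, ⟪F y, Ft y⟫_ℝ ≤ -ν * gradL2sq k F Fy + ν⁻¹ * gradL2sq k Φ Φy := by
  have hI : ∀ {h : ℝ → ℝ}, ContinuousOn h (Icc (-1) 1) → IntervalIntegrable h volume (-1) 1 :=
    fun hc => hc.intervalIntegrable_of_Icc (by norm_num)
  have hFc := HasDerivAt.continuousOn hF
  have hFyc := HasDerivAt.continuousOn hFy
  have hΦc := HasDerivAt.continuousOn hΦ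
  have hΦyc := HasDerivAt.continuousOn hΦy
  have hpt : ∀ y ∈ Icc (-1 : ℝ) 1, ⟪F y, ν • Fyy y + Φyy y⟫_ℝ
      = ⟪F y, Ft y⟫_ℝ + k ^ 2 * ⟪F y, ν • F y + Φ y⟫_ℝ := by
    intro y hy
    rcases eq_endpoints_or_mem_Ioo_of_mem_Icc hy with rfl | rfl | hy
    · simp [hFb.1]
    · simp [hFb.2]
    · exact real_inner_flux_deriv_eq_of_mode_eq (hFeq y hy) (hΦeq y hy)
  have hIcc : uIcc (-1 : ℝ) 1 = Icc (-1) 1 := uIcc_of_le (by norm_num)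
  have hFFt : ContinuousOn (fun y => ⟪F y, Ft y⟫_ℝ) (Icc (-1) 1) := by fun_prop
  have hFΦ : ContinuousOn (fun y => ⟪F y, ν • F y + Φ y⟫_ℝ) (Icc (-1) 1) := by fun_prop
  have hFyΦy : ContinuousOn (fun y => ⟪Fy y, ν • Fy y + Φy y⟫_ℝ) (Icc (-1) 1) := by fun_prop
  have hibp := integral_inner_deriv_eq_neg_integral_deriv_inner
    (v := fun y => ν • Fy y + Φy y) (fun y hy => hF y (hIcc ▸ hy))
    (fun y hy => ((hFy y (hIcc ▸ hy)).const_smul ν).add (hΦy y (hIcc ▸ hy)))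
    (hI ((hFFt.add (continuousOn_const.mul hFΦ)).congr hpt)) (hI hFyΦy) hFb.1 hFb.2
  rw [intervalIntegral.integral_congr (hIcc ▸ hpt), intervalIntegral.integral_add (hI hFFt)
    ((hI hFΦ).const_mul _), intervalIntegral.integral_const_mul] at hibp
  have hFy_young := half_mul_L2sq_sub_le_integral_inner hν hFyc hΦyc
  have hF_young := mul_le_mul_of_nonneg_left (half_mul_L2sq_sub_le_integral_inner hν hFc hΦc)
    (sq_nonneg k)
  rw [gradL2sq, gradL2sq]
  linarith

theorem forced_energy_estimate_general
    (ν k : ℝ) (f ft fy fyy g φ φy φyy : ℝ → ℝ → ℂ)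
    (hν : 0 < ν)
    (hf_cont : ContinuousOn (fun p : ℝ × ℝ => f p.1 p.2) (Ici 0 ×ˢ Icc (-1) 1))
    (hft_cont : ContinuousOn (fun p : ℝ × ℝ => ft p.1 p.2) (Ici 0 ×ˢ Icc (-1) 1))
    (hfy_cont : ContinuousOn (fun p : ℝ × ℝ => fy p.1 p.2) (Ici 0 ×ˢ Icc (-1) 1))
    (hfd_t : ∀ t ∈ Ici (0 : ℝ), ∀ y ∈ Icc (-1 : ℝ) 1,
      HasDerivAt (fun s => f s y) (ft t y) t)
    (hfd_y : ∀ t ∈ Ici (0 : ℝ), ∀ y ∈ Icc (-1 : ℝ) 1,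
      HasDerivAt (fun z => f t z) (fy t y) y)
    (hfd_yy : ∀ t ∈ Ici (0 : ℝ), ∀ y ∈ Icc (-1 : ℝ) 1,
      HasDerivAt (fun z => fy t z) (fyy t y) y)
    (hbdry : ∀ t ∈ Ici (0 : ℝ), f t (-1) = 0 ∧ f t 1 = 0)
    (heq : ∀ t ∈ Ici (0 : ℝ), ∀ y ∈ Ioo (-1 : ℝ) 1,
      ft t y = (ν : ℂ) * (fyy t y - (k : ℂ) ^ 2 * f t y)
        - Complex.I * (k : ℂ) * (y : ℂ) * f t y + g t y)
    (hφ_cont : ContinuousOn (fun p : ℝ × ℝ => φ p.1 p.2) (Ici 0 ×ˢ Icc (-1) 1))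
    (hφy_cont : ContinuousOn (fun p : ℝ × ℝ => φy p.1 p.2) (Ici 0 ×ˢ Icc (-1) 1))
    (hφd_y : ∀ t ∈ Ici (0 : ℝ), ∀ y ∈ Icc (-1 : ℝ) 1,
      HasDerivAt (fun z => φ t z) (φy t y) y)
    (hφd_yy : ∀ t ∈ Ici (0 : ℝ), ∀ y ∈ Icc (-1 : ℝ) 1,
      HasDerivAt (fun z => φy t z) (φyy t y) y)
    (hφeq : ∀ t ∈ Ici (0 : ℝ), ∀ y ∈ Ioo (-1 : ℝ) 1,
      φyy t y - (k : ℂ) ^ 2 * φ t y = g t y) :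
    ∀ t : ℝ, 0 ≤ t →
      L2sq (f t) + ν * ∫ s in (0 : ℝ)..t, (L2sq (fy s) + k ^ 2 * L2sq (f s))
        ≤ L2sq (f 0) + ν⁻¹ * ∫ s in (0 : ℝ)..t, (L2sq (φy s) + k ^ 2 * L2sq (φ s)) := by
  intro t ht
  have hslab : Icc 0 t ×ˢ Icc (-1 : ℝ) 1 ⊆ Ici 0 ×ˢ Icc (-1) 1 :=
    prod_mono Icc_subset_Ici_self subset_rfl
  have hf_grad := (continuousOn_gradL2sq k ht (hf_cont.mono hslab)
    (hfy_cont.mono hslab)).intervalIntegrable_of_Icc (μ := volume) ht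
  have hφ_grad := (continuousOn_gradL2sq k ht (hφ_cont.mono hslab)
    (hφy_cont.mono hslab)).intervalIntegrable_of_Icc (μ := volume) ht
  have hderiv : ∀ s ∈ Ioo 0 t, HasDerivAt (fun s => L2sq (f s))
      (2 * ∫ y in (-1 : ℝ)..1, ⟪f s y, ft s y⟫_ℝ) s := fun s hs => by
    have hball : closedBall s s ⊆ Ici 0 := by
      rw [Real.closedBall_eq_Icc, sub_self]
      exact Icc_subset_Ici_self
    have hsub := prod_mono hball (subset_refl (Icc (-1 : ℝ) 1))
    exact hasDerivAt_L2sq hs.1 (hf_cont.mono hsub) (hft_cont.mono hsub)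
      fun r hr => hfd_t r (hball (ball_subset_closedBall hr))
  have henergy := intervalIntegral.sub_le_integral_of_hasDeriv_right_of_le ht
    (continuousOn_L2sq ht (hf_cont.mono hslab)) (fun s hs => (hderiv s hs).hasDerivWithinAt)
    ((intervalIntegrable_iff_integrableOn_Icc_of_le ht).1
      ((hf_grad.const_mul (-ν)).add (hφ_grad.const_mul ν⁻¹)))
    fun s hs => two_mul_integral_inner_le_gradL2sq hν (hfd_y s hs.1.le) (hfd_yy s hs.1.le)
      (hφd_y s hs.1.le) (hφd_yy s hs.1.le)
      (hft_cont.comp (f := fun y => (s, y)) (by fun_prop) fun y hy => ⟨hs.1.le, hy⟩)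
      (hbdry s hs.1.le) (heq s hs.1.le) (hφeq s hs.1.le)
  rw [intervalIntegral.integral_add (hf_grad.const_mul _) (hφ_grad.const_mul _),
    intervalIntegral.integral_const_mul, intervalIntegral.integral_const_mul] at henergy
  simp only [gradL2sq] at henergy
  linarith

/-- Mode-wise energy estimate for the forced drift–diffusion equation
`∂_t f − ν(∂²_y − k²)f + iky f = g` with Dirichlet boundary conditions, where
`φ = (∂²_y − k²)^{-1} g`. -/
theorem forced_energy_estimate
    (ν k : ℝ) (f ft fy fyy g φ φy φyy : ℝ → ℝ → ℂ)
    (hν : 0 < ν)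
    (hf_cont : ContinuousOn (fun p : ℝ × ℝ => f p.1 p.2) (Ici 0 ×ˢ Icc (-1) 1))
    (hft_cont : ContinuousOn (fun p : ℝ × ℝ => ft p.1 p.2) (Ici 0 ×ˢ Icc (-1) 1))
    (hfy_cont : ContinuousOn (fun p : ℝ × ℝ => fy p.1 p.2) (Ici 0 ×ˢ Icc (-1) 1))
    (hfyy_cont : ContinuousOn (fun p : ℝ × ℝ => fyy p.1 p.2) (Ici 0 ×ˢ Icc (-1) 1))
    (hg_cont : ContinuousOn (fun p : ℝ × ℝ => g p.1 p.2) (Ici 0 ×ˢ Icc (-1) 1))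
    (hfd_t : ∀ t ∈ Ici (0 : ℝ), ∀ y ∈ Icc (-1 : ℝ) 1,
      HasDerivAt (fun s => f s y) (ft t y) t)
    (hfd_y : ∀ t ∈ Ici (0 : ℝ), ∀ y ∈ Icc (-1 : ℝ) 1,
      HasDerivAt (fun z => f t z) (fy t y) y)
    (hfd_yy : ∀ t ∈ Ici (0 : ℝ), ∀ y ∈ Icc (-1 : ℝ) 1,
      HasDerivAt (fun z => fy t z) (fyy t y) y)
    (hbdry : ∀ t ∈ Ici (0 : ℝ), f t (-1) = 0 ∧ f t 1 = 0)
    (heq : ∀ t ∈ Ici (0 : ℝ), ∀ y ∈ Ioo (-1 : ℝ) 1,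
      ft t y = (ν : ℂ) * (fyy t y - (k : ℂ) ^ 2 * f t y)
        - Complex.I * (k : ℂ) * (y : ℂ) * f t y + g t y)
    (hφ_cont : ContinuousOn (fun p : ℝ × ℝ => φ p.1 p.2) (Ici 0 ×ˢ Icc (-1) 1))
    (hφy_cont : ContinuousOn (fun p : ℝ × ℝ => φy p.1 p.2) (Ici 0 ×ˢ Icc (-1) 1))
    (hφd_y : ∀ t ∈ Ici (0 : ℝ), ∀ y ∈ Icc (-1 : ℝ) 1,
      HasDerivAt (fun z => φ t z) (φy t y) y)
    (hφd_yy : ∀ t ∈ Ici (0 : ℝ), ∀ y ∈ Icc (-1 : ℝ) 1,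
      HasDerivAt (fun z => φy t z) (φyy t y) y)
    (hφbdry : ∀ t ∈ Ici (0 : ℝ), φ t (-1) = 0 ∧ φ t 1 = 0)
    (hφeq : ∀ t ∈ Ici (0 : ℝ), ∀ y ∈ Ioo (-1 : ℝ) 1,
      φyy t y - (k : ℂ) ^ 2 * φ t y = g t y) :
    ∀ t : ℝ, 0 ≤ t →
      L2sq (f t) + ν * ∫ s in (0 : ℝ)..t, (L2sq (fy s) + k ^ 2 * L2sq (f s))
        ≤ L2sq (f 0) + ν⁻¹ * ∫ s in (0 : ℝ)..t, (L2sq (φy s) + k ^ 2 * L2sq (φ s)) :=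
  forced_energy_estimate_general ν k f ft fy fyy g φ φy φyy hν hf_cont hft_cont hfy_cont hfd_t hfd_y
    hfd_yy hbdry heq hφ_cont hφy_cont hφd_y hφd_yy hφeq
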